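/- arXiv:2604.22253 — 7 statements merged into one kernel-verified Lean document; each statement's English description precedes it below -/
import Mathlib

section
/- Let k ≥ 1, let a < b be real numbers, and let f_0, …, f_k : ℝ → ℝ be continuously differentiable on [a,b] with the endpoint nodal property f_i(a) = δ_{i0} and f_i(b) = δ_{ik}. Define the matrix Q ∈ Matrix (Fin (k+1)) (Fin (k+1)) ℝ by Q_{ij} = ∫_a^b f_i(x) f_j'(x) dx. Then Q possesses the summation-by-parts property Q + Qᵀ = B̃, where B̃ is the diagonal matrix diag(−1, 0, …, 0, 1), i.e. (Q + Qᵀ)_{ij} = δ_{ik} δ_{jk} − δ_{i0} δ_{j0}. -/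
open Matrix intervalIntegral

/-- The weak first-derivative matrix `Q` of a C¹ nodal basis on `[a,b]`
satisfies the summation-by-parts property `Q + Qᵀ = diag(-1,0,…,0,1)`. -/
theorem sbp_property_Q
    (k : ℕ) (hk : 1 ≤ k) (a b : ℝ) (hab : a < b)
    (f f' : Fin (k + 1) → ℝ → ℝ)
    (hderiv : ∀ i, ∀ x ∈ Set.Icc a b, HasDerivAt (f i) (f' i x) x)
    (hcont : ∀ i, ContinuousOn (f' i) (Set.Icc a b))
    (hfa : ∀ i, f i a = if i = 0 then 1 else 0)
    (hfb : ∀ i, f i b = if i = Fin.last k then 1 else 0)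
    (Q : Matrix (Fin (k + 1)) (Fin (k + 1)) ℝ)
    (hQ : ∀ i j, Q i j = ∫ x in a..b, f i x * f' j x) :
    ∀ i j, (Q + Qᵀ) i j =
      (if i = Fin.last k then (1 : ℝ) else 0) * (if j = Fin.last k then (1 : ℝ) else 0)
        - (if i = 0 then (1 : ℝ) else 0) * (if j = 0 then (1 : ℝ) else 0) := by
  intro i j
  have huicc : Set.uIcc a b = Set.Icc a b := Set.uIcc_of_le hab.le
  have key : (∫ x in a..b, f i x * f' j x)
      = f i b * f j b - f i a * f j a - ∫ x in a..b, f' i x * f j x := by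
    apply intervalIntegral.integral_mul_deriv_eq_deriv_mul
    · intro x hx; exact hderiv i x (huicc ▸ hx)
    · intro x hx; exact hderiv j x (huicc ▸ hx)
    · exact ((hcont i).mono huicc.le).intervalIntegrable
    · exact ((hcont j).mono huicc.le).intervalIntegrable
  simp only [Matrix.add_apply, Matrix.transpose_apply, hQ]
  rw [show (∫ x in a..b, f i x * f' j x) + ∫ x in a..b, f j x * f' i x
      = (∫ x in a..b, f' i x * f j x) + ∫ x in a..b, f i x * f' j x by
      rw [add_comm]; congr 1; simp [mul_comm]]
  rw [key, hfa, hfa, hfb, hfb]; ring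
end

section
/- Let k ≥ 1, let a < b be real numbers, and let f_0, …, f_k : ℝ → ℝ be twice continuously differentiable on [a,b] with the endpoint nodal property f_i(a) = δ_{i0} and f_i(b) = δ_{ik}. Suppose there is a matrix D ∈ Matrix (Fin (k+1)) (Fin (k+1)) ℝ with f_j'(x) = Σ_{m=0}^{k} D_{mj} f_m(x) for all x ∈ [a,b] and all j. Define P_{ij} = ∫_a^b f_i f_j dx and Q_{xx,ij} = ∫_a^b f_i(x) f_j''(x) dx. Then the weak second-derivative operator has the summation-by-parts form Q_{xx} = B̃ * D − Dᵀ * P * D, where B̃ = diag(−1, 0, …, 0, 1). -/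
open Matrix intervalIntegral

/-- The weak second-derivative operator of a C² nodal basis whose first derivatives
are exactly reproduced via the differentiation matrix `D` has the summation-by-parts
form `Q_{xx} = B̃ * D - Dᵀ * P * D` with `B̃ = diag(-1,0,…,0,1)`. -/
theorem sbp_property_Qxx
    (k : ℕ) (hk : 1 ≤ k) (a b : ℝ) (hab : a < b)
    (f f' f'' : Fin (k + 1) → ℝ → ℝ)
    (hderiv1 : ∀ i, ∀ x ∈ Set.Icc a b, HasDerivAt (f i) (f' i x) x)
    (hderiv2 : ∀ i, ∀ x ∈ Set.Icc a b, HasDerivAt (f' i) (f'' i x) x)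
    (hcont : ∀ i, ContinuousOn (f'' i) (Set.Icc a b))
    (hfa : ∀ i, f i a = if i = 0 then 1 else 0)
    (hfb : ∀ i, f i b = if i = Fin.last k then 1 else 0)
    (D : Matrix (Fin (k + 1)) (Fin (k + 1)) ℝ)
    (hD : ∀ j, ∀ x ∈ Set.Icc a b, f' j x = ∑ m, D m j * f m x)
    (P : Matrix (Fin (k + 1)) (Fin (k + 1)) ℝ)
    (hP : ∀ i j, P i j = ∫ x in a..b, f i x * f j x)
    (Qxx : Matrix (Fin (k + 1)) (Fin (k + 1)) ℝ)
    (hQxx : ∀ i j, Qxx i j = ∫ x in a..b, f i x * f'' j x)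
    (Bt : Matrix (Fin (k + 1)) (Fin (k + 1)) ℝ)
    (hBt : ∀ i j, Bt i j =
      (if i = Fin.last k then (1 : ℝ) else 0) * (if j = Fin.last k then (1 : ℝ) else 0)
        - (if i = 0 then (1 : ℝ) else 0) * (if j = 0 then (1 : ℝ) else 0)) :
    Qxx = Bt * D - Dᵀ * P * D := by

  have hab' : a ≤ b := hab.le
  have huIcc : Set.uIcc a b = Set.Icc a b := Set.uIcc_of_le hab'
  have hamem : a ∈ Set.Icc a b := Set.left_mem_Icc.mpr hab'
  have hbmem : b ∈ Set.Icc a b := Set.right_mem_Icc.mpr hab'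
  have hcf : ∀ i, ContinuousOn (f i) (Set.Icc a b) := fun i x hx =>
    ((hderiv1 i x hx).continuousAt).continuousWithinAt
  have hcf' : ∀ i, ContinuousOn (f' i) (Set.Icc a b) := fun i x hx =>
    ((hderiv2 i x hx).continuousAt).continuousWithinAt
  -- boundary values of f'
  have hf'a : ∀ j, f' j a = D 0 j := by
    intro j
    rw [hD j a hamem]
    simp [hfa]
  have hf'b : ∀ j, f' j b = D (Fin.last k) j := by
    intro j
    rw [hD j b hbmem]
    simp [hfb]
  -- integration by parts
  have hibp : ∀ i j, (∫ x in a..b, f i x * f'' j x)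
      = f i b * f' j b - f i a * f' j a - ∫ x in a..b, f' i x * f' j x := by
    intro i j
    exact integral_mul_deriv_eq_deriv_mul
      (fun x hx => hderiv1 i x (huIcc ▸ hx))
      (fun x hx => hderiv2 j x (huIcc ▸ hx))
      ((hcf' i).mono huIcc.le).intervalIntegrable
      ((hcont j).mono huIcc.le).intervalIntegrable
  -- the cross integral equals the quadratic form
  have hcross : ∀ i j, (∫ x in a..b, f' i x * f' j x)
      = ∑ m, ∑ n, D m i * (P m n * D n j) := by
    intro i j
    have h1 : (∫ x in a..b, f' i x * f' j x)
        = ∫ x in a..b, ∑ m, ∑ n, D m i * (f m x * f n x * D n j) := by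
      apply intervalIntegral.integral_congr
      intro x hx
      rw [huIcc] at hx
      show f' i x * f' j x = _
      rw [hD i x hx, hD j x hx, Finset.sum_mul_sum]
      apply Finset.sum_congr rfl
      intro m _
      apply Finset.sum_congr rfl
      intro n _
      ring
    rw [h1]
    rw [intervalIntegral.integral_finset_sum]
    · apply Finset.sum_congr rfl
      intro m _
      rw [intervalIntegral.integral_finset_sum]
      · apply Finset.sum_congr rfl
        intro n _
        rw [intervalIntegral.integral_const_mul, hP m n,
          ← intervalIntegral.integral_mul_const]
      · intro n _
        exact ((continuousOn_const.mul (((hcf m).mul (hcf n)).mul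
          continuousOn_const)).mono huIcc.le).intervalIntegrable
    · intro m _
      apply ContinuousOn.intervalIntegrable
      apply continuousOn_finset_sum
      intro n _
      exact (continuousOn_const.mul (((hcf m).mul (hcf n)).mul
        continuousOn_const)).mono huIcc.le
  ext i j
  rw [hQxx, hibp, hf'a, hf'b, hfa, hfb]
  simp only [Matrix.sub_apply, Matrix.mul_apply, Matrix.transpose_apply, hBt]
  rw [hcross]
  simp only [Finset.sum_sub_distrib, sub_mul, ite_mul, one_mul, zero_mul,
    Finset.sum_ite_eq, Finset.sum_ite_eq', Finset.mem_univ, if_true]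
  rw [Finset.sum_comm]
  simp [Finset.sum_mul, mul_assoc]
end

section
/- Let k ≥ 1 and let Q^L, Q^R ∈ Matrix (Fin (k+1)) (Fin (k+1)) ℝ each satisfy the element summation-by-parts property Q^L + (Q^L)ᵀ = B̃^e and Q^R + (Q^R)ᵀ = B̃^e, where B̃^e = diag(−1, 0, …, 0, 1) is of size k+1. Define the assembled global matrix K ∈ Matrix (Fin (2k+1)) (Fin (2k+1)) ℝ by K_{ij} = Q^L_{ij} if i ≤ k and j ≤ k, plus Q^R_{(i−k)(j−k)} if i ≥ k and j ≥ k (so the entry (k,k) is Q^L_{kk} + Q^R_{00}), and K_{ij} = 0 otherwise. Then K satisfies the global summation-by-parts property K + Kᵀ = diag(−1, 0, …, 0, 1) of size 2k+1. -/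
/-!
Assembly is additive and commutes with transposition, so `K + Kᵀ` is the assembly of the two
element boundary matrices `e_k e_kᵀ - e_0 e_0ᵀ`. Assembling a unit matrix `e_a e_bᵀ` on one
element gives the unit matrix at the corresponding global nodes; the right end of the left
element and the left end of the right element are the same global node `k`, so their
contributions `+1` and `-1` cancel and only the outer nodes `0` and `2k` survive.
-/

open Matrix

variable {R : Type*}

def sbpBoundary [Ring R] (n : ℕ) : Matrix (Fin (n + 1)) (Fin (n + 1)) R :=
  single (Fin.last n) (Fin.last n) 1 - single 0 0 1

theorem sbpBoundary_apply [Ring R] (n : ℕ) (i j : Fin (n + 1)) :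
    (sbpBoundary n : Matrix _ _ R) i j =
      (if i = Fin.last n then 1 else 0) * (if j = Fin.last n then 1 else 0)
        - (if i = 0 then 1 else 0) * (if j = 0 then 1 else 0) := by
  simp only [sbpBoundary, Matrix.sub_apply, single_apply, ite_zero_mul_ite_zero, mul_one, eq_comm]

def leftNode (k : ℕ) (a : Fin (k + 1)) : Fin (2 * k + 1) := ⟨a, by omega⟩

def rightNode (k : ℕ) (a : Fin (k + 1)) : Fin (2 * k + 1) := ⟨a + k, by omega⟩

theorem leftNode_zero (k : ℕ) : leftNode k 0 = 0 := rfl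

theorem leftNode_last (k : ℕ) : leftNode k (Fin.last k) = rightNode k 0 := by
  ext
  simp [leftNode, rightNode]

theorem rightNode_last (k : ℕ) : rightNode k (Fin.last k) = Fin.last (2 * k) := by
  ext
  simp only [rightNode, Fin.val_last]
  omega

def cgAssemble [Zero R] [Add R] (k : ℕ) (A C : Matrix (Fin (k + 1)) (Fin (k + 1)) R) :
    Matrix (Fin (2 * k + 1)) (Fin (2 * k + 1)) R :=
  fun i j =>
    (if h : i.val ≤ k ∧ j.val ≤ k then
        A ⟨i.val, Nat.lt_succ_of_le h.1⟩ ⟨j.val, Nat.lt_succ_of_le h.2⟩ else 0)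
      + (if h : k ≤ i.val ∧ k ≤ j.val then
          C ⟨i.val - k, Nat.sub_lt_left_of_lt_add h.1 (by omega)⟩
            ⟨j.val - k, Nat.sub_lt_left_of_lt_add h.2 (by omega)⟩ else 0)

theorem cgAssemble_transpose [Zero R] [Add R] (k : ℕ)
    (A C : Matrix (Fin (k + 1)) (Fin (k + 1)) R) :
    (cgAssemble k A C)ᵀ = cgAssemble k Aᵀ Cᵀ := by
  ext i j
  simp only [cgAssemble, transpose_apply, and_comm]

theorem cgAssemble_add [AddCommMonoid R] (k : ℕ)
    (A A' C C' : Matrix (Fin (k + 1)) (Fin (k + 1)) R) :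
    cgAssemble k A C + cgAssemble k A' C' = cgAssemble k (A + A') (C + C') := by
  ext i j
  simp only [cgAssemble, Matrix.add_apply]
  split_ifs <;> abel

theorem cgAssemble_sub [AddCommGroup R] (k : ℕ)
    (A A' C C' : Matrix (Fin (k + 1)) (Fin (k + 1)) R) :
    cgAssemble k A C - cgAssemble k A' C' = cgAssemble k (A - A') (C - C') := by
  ext i j
  simp only [cgAssemble, Matrix.sub_apply]
  split_ifs <;> abel

theorem cgAssemble_single_zero [AddZeroClass R] (k : ℕ) (a b : Fin (k + 1)) (c : R) :
    cgAssemble k (single a b c) 0 = single (leftNode k a) (leftNode k b) c := by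
  ext i j
  simp only [cgAssemble, single_apply, leftNode, Matrix.zero_apply, Fin.ext_iff]
  have := a.isLt
  have := b.isLt
  split_ifs <;> first | omega | simp

theorem cgAssemble_zero_single [AddZeroClass R] (k : ℕ) (a b : Fin (k + 1)) (c : R) :
    cgAssemble k 0 (single a b c) = single (rightNode k a) (rightNode k b) c := by
  ext i j
  simp only [cgAssemble, single_apply, rightNode, Matrix.zero_apply, Fin.ext_iff]
  have := a.isLt
  have := b.isLt
  split_ifs <;> first | omega | simp

theorem cgAssemble_single_single [AddCommMonoid R] (k : ℕ) (a b : Fin (k + 1)) (c : R) :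
    cgAssemble k (single a b c) (single a b c) =
      single (leftNode k a) (leftNode k b) c + single (rightNode k a) (rightNode k b) c := by
  rw [← cgAssemble_single_zero, ← cgAssemble_zero_single, cgAssemble_add, add_zero, zero_add]

theorem cgAssemble_sbpBoundary [Ring R] (k : ℕ) :
    cgAssemble k (sbpBoundary k) (sbpBoundary k) = (sbpBoundary (2 * k) : Matrix _ _ R) := by
  rw [sbpBoundary, ← cgAssemble_sub, cgAssemble_single_single, cgAssemble_single_single,
    leftNode_zero, leftNode_last, rightNode_last, sbpBoundary]
  abel

/-- Continuous-Galerkin assembly of two element-level SBP operators preserves the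
summation-by-parts property: the assembled global matrix `K` on a two-element mesh
satisfies `K + Kᵀ = diag(-1,0,…,0,1)` of size `2k+1`. -/
theorem assembled_global_sbp
    (k : ℕ)
    (QL QR : Matrix (Fin (k + 1)) (Fin (k + 1)) ℝ)
    (hQL : ∀ i j, (QL + QLᵀ) i j =
      (if i = Fin.last k then (1 : ℝ) else 0) * (if j = Fin.last k then (1 : ℝ) else 0)
        - (if i = 0 then (1 : ℝ) else 0) * (if j = 0 then (1 : ℝ) else 0))
    (hQR : ∀ i j, (QR + QRᵀ) i j =
      (if i = Fin.last k then (1 : ℝ) else 0) * (if j = Fin.last k then (1 : ℝ) else 0)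
        - (if i = 0 then (1 : ℝ) else 0) * (if j = 0 then (1 : ℝ) else 0))
    (K : Matrix (Fin (2 * k + 1)) (Fin (2 * k + 1)) ℝ)
    (hK : ∀ i j : Fin (2 * k + 1), K i j =
      (if h : i.val ≤ k ∧ j.val ≤ k then
          QL ⟨i.val, by omega⟩ ⟨j.val, by omega⟩ else 0)
        + (if h : k ≤ i.val ∧ k ≤ j.val then
            QR ⟨i.val - k, by omega⟩ ⟨j.val - k, by omega⟩ else 0)) :
    ∀ i j : Fin (2 * k + 1), (K + Kᵀ) i j =
      (if i = Fin.last (2 * k) then (1 : ℝ) else 0) *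
          (if j = Fin.last (2 * k) then (1 : ℝ) else 0)
        - (if i = 0 then (1 : ℝ) else 0) * (if j = 0 then (1 : ℝ) else 0) := by
  have hK_eq : K = cgAssemble k QL QR := Matrix.ext hK
  have hQL_eq : QL + QLᵀ = sbpBoundary k := Matrix.ext fun i j => by rw [hQL, sbpBoundary_apply]
  have hQR_eq : QR + QRᵀ = sbpBoundary k := Matrix.ext fun i j => by rw [hQR, sbpBoundary_apply]
  intro i j
  rw [hK_eq, cgAssemble_transpose, cgAssemble_add, hQL_eq, hQR_eq, cgAssemble_sbpBoundary,
    sbpBoundary_apply]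
end

section
/- Let u, v, p, n_x, n_y be real numbers with n_x² + n_y² = 1. Define the 3×3 matrices A = ![![u, 0, 1], ![0, u, 0], ![1, 0, 0]] and B = ![![v, 0, 0], ![0, v, 1], ![0, 1, 0]], the vector w = (u, v, p), the normal velocity u_n = u n_x + v n_y, and the tangential velocity u_t = −u n_y + v n_x. Then n_x · (w ⬝ᵥ (A *ᵥ w)) + n_y · (w ⬝ᵥ (B *ᵥ w)) = u_n (u_n² + u_t² + 2p). -/
open Matrix

/-- The advective boundary flux `n_x wᵀAw + n_y wᵀBw` for the incompressible
Navier–Stokes flux Jacobians equals `u_n (u_n² + u_t² + 2p)` in the rotated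
boundary variables. -/
theorem advective_boundary_flux_rotated
    (u v p nx ny : ℝ) (hn : nx ^ 2 + ny ^ 2 = 1)
    (A B : Matrix (Fin 3) (Fin 3) ℝ)
    (hA : A = ![![u, 0, 1], ![0, u, 0], ![1, 0, 0]])
    (hB : B = ![![v, 0, 0], ![0, v, 1], ![0, 1, 0]])
    (w : Fin 3 → ℝ) (hw : w = ![u, v, p])
    (un ut : ℝ) (hun : un = u * nx + v * ny) (hut : ut = -u * ny + v * nx) :
    nx * (w ⬝ᵥ (A *ᵥ w)) + ny * (w ⬝ᵥ (B *ᵥ w)) = un * (un ^ 2 + ut ^ 2 + 2 * p) := by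
  subst hA hB hw hun hut
  simp [dotProduct, mulVec, Fin.sum_univ_three, vecHead, vecTail]
  linear_combination -(u * nx + v * ny) * (u ^ 2 + v ^ 2) * hn
end

section
/- Let ε, u_n, u_t, p, du_n, du_t be real numbers. Define the boundary term BT = −u_n(u_n² + u_t² + 2p) + 2ε(u_n · du_n + u_t · du_t) and the SAT penalty contribution S = 2[ u_n · (u_n/2) · u_n + u_t · (u_n/2) · u_t + p · u_n ] − 2ε[ du_n · u_n + du_t · u_t ], corresponding to the penalty matrix Σ = Rᵀ(Σ₁′ + εΣ₂′) with Σ₁′ = ![![u_n/2, 0, 0], ![0, u_n/2, 0], ![1, 0, 0]] and Σ₂′ the matrix applying minus the normal derivative to the first two components. Then BT + S = 0; i.e. with this choice of penalty the boundary contribution BC in the energy rate vanishes identically, yielding an energy bound for the weakly imposed homogeneous boundary conditions. -/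
/-- With the SAT penalty choice `Σ = Rᵀ(Σ₁′ + εΣ₂′)`, the boundary term `BT` and the
penalty contribution `S` cancel exactly: `BT + S = 0`, so the boundary contribution
in the continuous energy rate vanishes for homogeneous boundary data. -/
theorem continuous_penalty_cancellation
    (ε un ut p dun dut BT S : ℝ)
    (hBT : BT = -un * (un ^ 2 + ut ^ 2 + 2 * p) + 2 * ε * (un * dun + ut * dut))
    (hS : S = 2 * (un * (un / 2) * un + ut * (un / 2) * ut + p * un)
        - 2 * ε * (dun * un + dut * ut)) :
    BT + S = 0 := by
  subst hBT hS; ring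
end

section
/- Let n ≥ 1 and ε ∈ ℝ. Let P, Q, B̃, D ∈ Matrix (Fin n) (Fin n) ℝ with P symmetric, Q + Qᵀ = B̃, and set Q_{xx} = B̃ * D − Dᵀ * P * D. Let A : ℝ → Matrix (Fin n) (Fin n) ℝ with A(t) symmetric for every t, and let W : ℝ → (Fin n → ℝ) be differentiable, satisfying the semi-discrete scheme P *ᵥ W'(t) = −(1/2) ((A(t) * Q + Q * A(t)) *ᵥ W(t)) + ε (Q_{xx} *ᵥ W(t)) for all t. Then for all t: d/dt [ W(t) ⬝ᵥ (P *ᵥ W(t)) ] = −W(t) ⬝ᵥ ((A(t) * B̃) *ᵥ W(t)) + 2ε W(t) ⬝ᵥ ((B̃ * D) *ᵥ W(t)) − 2ε (D *ᵥ W(t)) ⬝ᵥ (P *ᵥ (D *ᵥ W(t))). -/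
/-!
Since `P` is symmetric, `d/dt (WᵀPW) = 2 WᵀPW'`, and the scheme expresses `PW'`. The symmetry
of `A` turns `Wᵀ(AQ + QA)W` into `WᵀA(Q + Qᵀ)W = WᵀAB̃W`, and `Wᵀ(DᵀPD)W = (DW)ᵀP(DW)`.
-/

open Matrix

section Calculus

variable {𝕜 : Type*} [NontriviallyNormedField 𝕜] {ι : Type*} [Fintype ι]
  {f g : 𝕜 → ι → 𝕜} {f' g' : ι → 𝕜} {t : 𝕜}

theorem HasDerivAt.dotProduct (hf : HasDerivAt f f' t) (hg : HasDerivAt g g' t) :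
    HasDerivAt (fun s => f s ⬝ᵥ g s) (f' ⬝ᵥ g t + f t ⬝ᵥ g') t := by
  have := HasDerivAt.fun_sum (u := Finset.univ) fun i _ =>
    (hasDerivAt_pi.mp hf i).mul (hasDerivAt_pi.mp hg i)
  rwa [Finset.sum_add_distrib] at this

theorem HasDerivAt.mulVec {κ : Type*} (M : Matrix κ ι 𝕜) (hf : HasDerivAt f f' t) :
    HasDerivAt (fun s => M *ᵥ f s) (M *ᵥ f') t :=
  hasDerivAt_pi.mpr fun i => HasDerivAt.fun_sum fun j _ =>
    (hasDerivAt_pi.mp hf j).const_mul (M i j)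

theorem HasDerivAt.dotProduct_mulVec_self {P : Matrix ι ι 𝕜} (hP : Pᵀ = P)
    (hf : HasDerivAt f f' t) :
    HasDerivAt (fun s => f s ⬝ᵥ (P *ᵥ f s)) (2 * (f t ⬝ᵥ (P *ᵥ f'))) t := by
  convert hf.dotProduct (hf.mulVec P) using 1
  rw [two_mul, ← dotProduct_transpose_mulVec, hP]

end Calculus

section QuadraticForms

variable {R : Type*} [CommRing R] {ι κ : Type*} [Fintype ι] [Fintype κ]

theorem dotProduct_mul_add_mul_mulVec_self {A : Matrix ι ι R} (hA : Aᵀ = A)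
    (Q : Matrix ι ι R) (x : ι → R) :
    x ⬝ᵥ ((A * Q + Q * A) *ᵥ x) = x ⬝ᵥ ((A * (Q + Qᵀ)) *ᵥ x) := by
  rw [Matrix.mul_add, add_mulVec, add_mulVec, dotProduct_add, dotProduct_add,
    ← dotProduct_transpose_mulVec (Q * A) x x, transpose_mul, hA]

theorem dotProduct_transpose_mul_mul_mulVec_self (D : Matrix κ ι R) (P : Matrix κ κ R)
    (x : ι → R) : x ⬝ᵥ ((Dᵀ * P * D) *ᵥ x) = (D *ᵥ x) ⬝ᵥ (P *ᵥ (D *ᵥ x)) := by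
  rw [← mulVec_mulVec, ← mulVec_mulVec, dotProduct_transpose_mulVec, dotProduct_comm]

end QuadraticForms

theorem semidiscrete_energy_rate_general
    (n : ℕ) (ε : ℝ)
    (P Q Bt D Qxx : Matrix (Fin n) (Fin n) ℝ)
    (hP : Pᵀ = P) (hSBP : Q + Qᵀ = Bt) (hQxx : Qxx = Bt * D - Dᵀ * P * D)
    (A : ℝ → Matrix (Fin n) (Fin n) ℝ) (hA : ∀ t, (A t)ᵀ = A t)
    (W W' : ℝ → Fin n → ℝ) (hW : ∀ t, HasDerivAt W (W' t) t)
    (hscheme : ∀ t, P *ᵥ W' t =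
      -(1 / 2 : ℝ) • ((A t * Q + Q * A t) *ᵥ W t) + ε • (Qxx *ᵥ W t)) :
    ∀ t, HasDerivAt (fun s => W s ⬝ᵥ (P *ᵥ W s))
      (-(W t ⬝ᵥ ((A t * Bt) *ᵥ W t)) + 2 * ε * (W t ⬝ᵥ ((Bt * D) *ᵥ W t))
        - 2 * ε * ((D *ᵥ W t) ⬝ᵥ (P *ᵥ (D *ᵥ W t)))) t := by
  intro t
  refine ((hW t).dotProduct_mulVec_self hP).congr_deriv ?_
  rw [hscheme t, dotProduct_add, dotProduct_smul, dotProduct_smul, smul_eq_mul, smul_eq_mul,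
    dotProduct_mul_add_mul_mulVec_self (hA t), hSBP, hQxx, sub_mulVec, dotProduct_sub,
    dotProduct_transpose_mul_mul_mulVec_self]
  ring

/-- Semi-discrete energy rate: for the SBP semi-discretization
`P W' = -(1/2)(AQ + QA)W + ε Q_{xx} W` with `P` symmetric, `Q + Qᵀ = B̃`,
`Q_{xx} = B̃D - DᵀPD` and `A(t)` symmetric, the discrete energy `WᵀPW` satisfies
`d/dt (WᵀPW) = -Wᵀ(AB̃)W + 2ε Wᵀ(B̃D)W - 2ε (DW)ᵀP(DW)`. -/
theorem semidiscrete_energy_rate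
    (n : ℕ) (hn : 1 ≤ n) (ε : ℝ)
    (P Q Bt D Qxx : Matrix (Fin n) (Fin n) ℝ)
    (hP : Pᵀ = P) (hSBP : Q + Qᵀ = Bt) (hQxx : Qxx = Bt * D - Dᵀ * P * D)
    (A : ℝ → Matrix (Fin n) (Fin n) ℝ) (hA : ∀ t, (A t)ᵀ = A t)
    (W W' : ℝ → Fin n → ℝ) (hW : ∀ t, HasDerivAt W (W' t) t)
    (hscheme : ∀ t, P *ᵥ W' t =
      -(1 / 2 : ℝ) • ((A t * Q + Q * A t) *ᵥ W t) + ε • (Qxx *ᵥ W t)) :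
    ∀ t, HasDerivAt (fun s => W s ⬝ᵥ (P *ᵥ W s))
      (-(W t ⬝ᵥ ((A t * Bt) *ᵥ W t)) + 2 * ε * (W t ⬝ᵥ ((Bt * D) *ᵥ W t))
        - 2 * ε * ((D *ᵥ W t) ⬝ᵥ (P *ᵥ (D *ᵥ W t)))) t :=
  semidiscrete_energy_rate_general n ε P Q Bt D Qxx hP hSBP hQxx A hA W W' hW hscheme
end

section
/- Let m ≥ 1 and ε ∈ ℝ. Let U_n, U_t, p, dU_n, dU_t ∈ Fin m → ℝ be vectors, and let 𝔓 ∈ Matrix (Fin m) (Fin m) ℝ be a diagonal matrix. Define the discrete boundary term 𝔹𝕋 = −[ U_n ⬝ᵥ (𝔓 *ᵥ (diag(U_n) *ᵥ U_n)) + U_t ⬝ᵥ (𝔓 *ᵥ (diag(U_n) *ᵥ U_t)) + 2 U_n ⬝ᵥ (𝔓 *ᵥ p) − 2ε( U_n ⬝ᵥ (𝔓 *ᵥ dU_n) + U_t ⬝ᵥ (𝔓 *ᵥ dU_t) ) ] and the discrete SAT penalty contribution 𝕊 = 2[ U_n ⬝ᵥ ((1/2) • (diag(U_n) *ᵥ (𝔓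 *ᵥ U_n))) + U_t ⬝ᵥ ((1/2) • (diag(U_n) *ᵥ (𝔓 *ᵥ U_t))) + p ⬝ᵥ (𝔓 *ᵥ U_n) ] − 2ε[ dU_n ⬝ᵥ (𝔓 *ᵥ U_n) + dU_t ⬝ᵥ (𝔓 *ᵥ U_t) ]. Then 𝔹𝕋 + 𝕊 = 0. -/
open Matrix

/-- Discrete penalty cancellation (Proposition 4): with the discrete SAT penalty
mimicking the continuous one and the diagonal boundary quadrature matrix `𝔓`,
the discrete boundary term and the SAT contribution cancel exactly: `𝔹𝕋 + 𝕊 = 0`. -/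
theorem discrete_penalty_cancellation
    (m : ℕ) (hm : 1 ≤ m) (ε : ℝ)
    (Un Ut p dUn dUt : Fin m → ℝ)
    (𝔓 : Matrix (Fin m) (Fin m) ℝ) (h𝔓 : 𝔓.IsDiag)
    (𝔹𝕋 𝕊 : ℝ)
    (h𝔹𝕋 : 𝔹𝕋 = -(Un ⬝ᵥ (𝔓 *ᵥ (Matrix.diagonal Un *ᵥ Un))
        + Ut ⬝ᵥ (𝔓 *ᵥ (Matrix.diagonal Un *ᵥ Ut))
        + 2 * (Un ⬝ᵥ (𝔓 *ᵥ p))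
        - 2 * ε * (Un ⬝ᵥ (𝔓 *ᵥ dUn) + Ut ⬝ᵥ (𝔓 *ᵥ dUt))))
    (h𝕊 : 𝕊 = 2 * (Un ⬝ᵥ ((1 / 2 : ℝ) • (Matrix.diagonal Un *ᵥ (𝔓 *ᵥ Un)))
        + Ut ⬝ᵥ ((1 / 2 : ℝ) • (Matrix.diagonal Un *ᵥ (𝔓 *ᵥ Ut)))
        + p ⬝ᵥ (𝔓 *ᵥ Un))
        - 2 * ε * (dUn ⬝ᵥ (𝔓 *ᵥ Un) + dUt ⬝ᵥ (𝔓 *ᵥ Ut))) :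
    𝔹𝕋 + 𝕊 = 0 := by
  obtain ⟨d, rfl⟩ : ∃ d, 𝔓 = Matrix.diagonal d := ⟨Matrix.diag 𝔓, (h𝔓.diagonal_diag).symm⟩
  subst h𝔹𝕋 h𝕊
  simp only [Matrix.mulVec_diagonal, Matrix.diagonal_mulVec_single, dotProduct,
    Pi.smul_apply, smul_eq_mul, Finset.mul_sum, Finset.sum_sub_distrib, neg_add_rev]
  simp only [Finset.mul_sum, ← Finset.sum_neg_distrib, ← Finset.sum_add_distrib,
    ← Finset.sum_sub_distrib]
  refine Finset.sum_eq_zero fun i _ => ?_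
  ring
end
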